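/- arXiv:2511.10746 — 5 statements merged into one kernel-verified Lean document; each statement's English description precedes it below -/
import Mathlib

section
/- If κ₁ is a kernel of the weakly ranked poset P₁ and κ₂ is a kernel of P₂, then κ₁ ⊗ κ₂ is a kernel of P₁ × P₂ with the sum rank function. -/
open Finset Polynomial


variable {P P₁ P₂ : Type*}

/-- A weak rank function on a poset, in the sense of Brenti/CF25. -/
def IsWeakRank [Preorder P] (rk : P → P → ℤ) : Prop :=
  (∀ s t : P, s < t → 0 < rk s t) ∧
    ∀ s u t : P, s ≤ u → u ≤ t → rk s t = rk s u + rk u t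

noncomputable section
open scoped Classical

/-- Membership in the rank-bounded incidence algebra `J_rk(P)`:
functions on intervals with values in `ℤ[x]` of degree bounded by the rank. -/
def InJ [Preorder P] (rk : P → P → ℤ) (a : P → P → Polynomial ℤ) : Prop :=
  (∀ s t : P, ¬ s ≤ t → a s t = 0) ∧
    ∀ s t : P, s ≤ t → ((a s t).natDegree : ℤ) ≤ rk s t

/-- Convolution product in the incidence algebra. -/
def conv [Fintype P] (a b : P → P → Polynomial ℤ) : P → P → Polynomial ℤ :=
  fun s t => ∑ u : P, a s u * b u t

/-- The identity (delta function) of the incidence algebra. -/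
def delta : P → P → Polynomial ℤ := fun s t => if s = t then 1 else 0

/-- The reversal operation `(a^rev)_{s,t} = x^{rk(s,t)}·a_{s,t}(x⁻¹)`. -/
def rev (rk : P → P → ℤ) (a : P → P → Polynomial ℤ) : P → P → Polynomial ℤ :=
  fun s t => (a s t).reflect (rk s t).toNat

/-- Entrywise tensor product of incidence functions on a product poset. -/
def tensor (a₁ : P₁ → P₁ → Polynomial ℤ) (a₂ : P₂ → P₂ → Polynomial ℤ) :
    P₁ × P₂ → P₁ × P₂ → Polynomial ℤ :=
  fun p q => a₁ p.1 q.1 * a₂ p.2 q.2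

/-- The sum rank function on a product poset. -/
def prodRk (rk₁ : P₁ → P₁ → ℤ) (rk₂ : P₂ → P₂ → ℤ) : P₁ × P₂ → P₁ × P₂ → ℤ :=
  fun p q => rk₁ p.1 q.1 + rk₂ p.2 q.2

/-- A kernel: an element of `J_rk(P)` which is invertible with `κ⁻¹ = κ^rev`. -/
def IsKernel [Preorder P] [Fintype P] (rk : P → P → ℤ) (κ : P → P → Polynomial ℤ) : Prop :=
  InJ rk κ ∧ conv κ (rev rk κ) = delta ∧ conv (rev rk κ) κ = delta

/-- The reduced kernel `κ̄`: `κ̄_{s,s} = -1` and `κ̄_{s,t} = κ_{s,t}/(x-1)` for `s ≠ t`. -/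
def IsReducedKernel [Preorder P] (κ κb : P → P → Polynomial ℤ) : Prop :=
  (∀ s : P, κb s s = -1) ∧ ∀ s t : P, s ≠ t → (X - 1) * κb s t = κ s t

/-- The Chow function `H = -κ̄⁻¹` associated to a reduced kernel `κ̄`. -/
def IsChowFunction [Preorder P] [Fintype P] (κb H : P → P → Polynomial ℤ) : Prop :=
  conv κb H = -delta ∧ conv H κb = -delta

/-- The right KLS function of `(P, κ)`. -/
def IsRightKLS [Preorder P] [Fintype P] (rk : P → P → ℤ)
    (κ f : P → P → Polynomial ℤ) : Prop :=
  InJ rk f ∧ (∀ s : P, f s s = 1) ∧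
    (∀ s t : P, s < t → 2 * ((f s t).natDegree : ℤ) < rk s t) ∧
    rev rk f = conv κ f

/-- The left KLS function of `(P, κ)`. -/
def IsLeftKLS [Preorder P] [Fintype P] (rk : P → P → ℤ)
    (κ g : P → P → Polynomial ℤ) : Prop :=
  InJ rk g ∧ (∀ s : P, g s s = 1) ∧
    (∀ s t : P, s < t → 2 * ((g s t).natDegree : ℤ) < rk s t) ∧
    rev rk g = conv g κ

/-- The zeta function of a poset. -/
def zeta [Preorder P] : P → P → Polynomial ℤ := fun s t => if s ≤ t then 1 else 0

/-- Convolution powers. -/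
def convPow [Fintype P] (a : P → P → Polynomial ℤ) : ℕ → P → P → Polynomial ℤ
  | 0 => delta
  | k + 1 => conv a (convPow a k)

/-- The inverse of a unitriangular element of the incidence algebra,
via the finite geometric series `∑ (I - a)^k`. -/
def invInc [Fintype P] (a : P → P → Polynomial ℤ) : P → P → Polynomial ℤ :=
  ∑ k ∈ Finset.range (Fintype.card P), convPow (delta - a) k

/-- The characteristic function `χ = ζ⁻¹ · ζ^rev` of a weakly ranked poset. -/
def charFn [Preorder P] [Fintype P] (rk : P → P → ℤ) : P → P → Polynomial ℤ :=
  conv (invInc zeta) (rev rk zeta)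

/-- The reduced characteristic function `χ̄`. -/
def charFnRed [Preorder P] [Fintype P] (rk : P → P → ℤ) : P → P → Polynomial ℤ :=
  fun s t => if s = t then -1 else charFn rk s t /ₘ (X - C 1)

/-- The Chow function `H = -χ̄⁻¹` of a weakly ranked poset w.r.t. the characteristic kernel. -/
def chowFn [Preorder P] [Fintype P] (rk : P → P → ℤ) : P → P → Polynomial ℤ :=
  invInc (-(charFnRed rk))

end

section Aux

open scoped Classical

lemma weakRank_nonneg [PartialOrder P] {rk : P → P → ℤ} (h : IsWeakRank rk)
    {s t : P} (hst : s ≤ t) : 0 ≤ rk s t := by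
  rcases eq_or_lt_of_le hst with rfl | hlt
  · have := h.2 s s s le_rfl le_rfl
    omega
  · exact (h.1 s t hlt).le

lemma conv_tensor {P₁ P₂ : Type*} [Fintype P₁] [Fintype P₂]
    (a₁ b₁ : P₁ → P₁ → Polynomial ℤ) (a₂ b₂ : P₂ → P₂ → Polynomial ℤ) :
    conv (tensor a₁ a₂) (tensor b₁ b₂) = tensor (conv a₁ b₁) (conv a₂ b₂) := by
  funext p q
  simp only [conv, tensor, Fintype.sum_prod_type, Finset.sum_mul_sum]
  refine Finset.sum_congr rfl fun u₁ _ => Finset.sum_congr rfl fun u₂ _ => ?_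
  ring

lemma tensor_delta {P₁ P₂ : Type*} :
    tensor (delta : P₁ → P₁ → Polynomial ℤ) (delta : P₂ → P₂ → Polynomial ℤ) =
      (delta : P₁ × P₂ → P₁ × P₂ → Polynomial ℤ) := by
  funext p q
  simp only [tensor, delta, Prod.ext_iff]
  by_cases h1 : p.1 = q.1 <;> by_cases h2 : p.2 = q.2 <;> simp [h1, h2]

lemma rev_tensor {P₁ P₂ : Type*} [PartialOrder P₁] [PartialOrder P₂]
    {rk₁ : P₁ → P₁ → ℤ} {rk₂ : P₂ → P₂ → ℤ}
    (h₁ : IsWeakRank rk₁) (h₂ : IsWeakRank rk₂)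
    {κ₁ : P₁ → P₁ → Polynomial ℤ} {κ₂ : P₂ → P₂ → Polynomial ℤ}
    (hJ₁ : InJ rk₁ κ₁) (hJ₂ : InJ rk₂ κ₂) :
    rev (prodRk rk₁ rk₂) (tensor κ₁ κ₂) = tensor (rev rk₁ κ₁) (rev rk₂ κ₂) := by
  funext p q
  simp only [rev, tensor, prodRk]
  by_cases hle1 : p.1 ≤ q.1
  · by_cases hle2 : p.2 ≤ q.2
    · have d1 : (κ₁ p.1 q.1).natDegree ≤ (rk₁ p.1 q.1).toNat := by
        have := hJ₁.2 p.1 q.1 hle1; omega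
      have d2 : (κ₂ p.2 q.2).natDegree ≤ (rk₂ p.2 q.2).toNat := by
        have := hJ₂.2 p.2 q.2 hle2; omega
      rw [Int.toNat_add (weakRank_nonneg h₁ hle1) (weakRank_nonneg h₂ hle2),
        Polynomial.reflect_mul _ _ d1 d2]
    · rw [hJ₂.1 p.2 q.2 hle2]
      simp
  · rw [hJ₁.1 p.1 q.1 hle1]
    simp

end Aux

/-- The tensor product of kernels is a kernel of the product poset with the sum
rank function. -/
theorem tensor_isKernel {P₁ P₂ : Type*} [PartialOrder P₁] [Fintype P₁]
    [PartialOrder P₂] [Fintype P₂]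
    (rk₁ : P₁ → P₁ → ℤ) (rk₂ : P₂ → P₂ → ℤ)
    (h₁ : IsWeakRank rk₁) (h₂ : IsWeakRank rk₂)
    (κ₁ : P₁ → P₁ → Polynomial ℤ) (κ₂ : P₂ → P₂ → Polynomial ℤ)
    (hκ₁ : IsKernel rk₁ κ₁) (hκ₂ : IsKernel rk₂ κ₂) :
    IsKernel (prodRk rk₁ rk₂) (tensor κ₁ κ₂) := by
  obtain ⟨hJ₁, hr₁, hl₁⟩ := hκ₁
  obtain ⟨hJ₂, hr₂, hl₂⟩ := hκ₂
  refine ⟨⟨?_, ?_⟩, ?_, ?_⟩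
  · intro s t hst
    rw [Prod.le_def, not_and_or] at hst
    rcases hst with h | h
    · simp [tensor, hJ₁.1 _ _ h]
    · simp [tensor, hJ₂.1 _ _ h]
  · intro s t hst
    rw [Prod.le_def] at hst
    have d1 := hJ₁.2 s.1 t.1 hst.1
    have d2 := hJ₂.2 s.2 t.2 hst.2
    have := Polynomial.natDegree_mul_le (p := κ₁ s.1 t.1) (q := κ₂ s.2 t.2)
    simp only [tensor, prodRk]
    omega
  · rw [rev_tensor h₁ h₂ hJ₁ hJ₂, conv_tensor, hr₁, hr₂, tensor_delta]
  · rw [rev_tensor h₁ h₂ hJ₁ hJ₂, conv_tensor, hl₁, hl₂, tensor_delta]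
end

section
/- The characteristic function χ := ζ^{-1}·ζ^rev of a weakly ranked poset P is a kernel, i.e., χ^{-1} = χ^rev. -/
open Finset Polynomial


variable {P P₁ P₂ : Type*}

/-! The characteristic function is `χ = μ · ζ^rev`, where `μ = ζ⁻¹` is the finite geometric series
in the nilpotent element `δ - ζ`, so `μ` lies in `J_rk(P)` together with `ζ`. On `J_rk(P)` reversal
is an involution and is multiplicative, because the rank is additive along `s ≤ u ≤ t`. Hence
`χ^rev = μ^rev · ζ`, and `χ · χ^rev = μ · (ζ μ)^rev · ζ = μ ζ = δ`; symmetrically `χ^rev · χ = δ`. -/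

theorem Polynomial.reflect_sum {R ι : Type*} [Ring R] (s : Finset ι) (f : ι → R[X]) (N : ℕ) :
    (∑ i ∈ s, f i).reflect N = ∑ i ∈ s, (f i).reflect N :=
  map_sum (AddMonoidHom.mk' (reflect N) fun p q => reflect_add p q N) f s

namespace Matrix

variable {R : Type*} [Semiring R] [Preorder P] [Fintype P] [DecidableEq P]

theorem lt_card_of_pow_apply_ne_zero [DecidableRel (α := P) (· ≤ ·)] {N : Matrix P P R}
    (hN : ∀ s t, N s t ≠ 0 → s < t) (k : ℕ) (s t : P) (hk : (N ^ k) s t ≠ 0) :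
    k < #({u | s ≤ u} : Finset P) := by
  induction k generalizing s with
  | zero => exact card_pos.mpr ⟨s, by simp⟩
  | succ k ih =>
    rw [pow_succ', mul_apply] at hk
    obtain ⟨u, -, hu⟩ := exists_ne_zero_of_sum_ne_zero hk
    have hsu : s < u := hN s u (left_ne_zero_of_mul hu)
    have hsub : ({v | u ≤ v} : Finset P) ⊂ ({v | s ≤ v} : Finset P) :=
      (ssubset_iff_of_subset fun v hv => by simp_all [hsu.le.trans]).mpr
        ⟨s, by simp, by simpa using hsu.not_ge⟩
    exact lt_of_le_of_lt (ih u (right_ne_zero_of_mul hu)) (card_lt_card hsub)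

theorem pow_card_eq_zero_of_lt {N : Matrix P P R} (hN : ∀ s t, N s t ≠ 0 → s < t) :
    N ^ Fintype.card P = 0 := by
  classical
  ext s t
  by_contra hst
  exact (lt_card_of_pow_apply_ne_zero hN _ s t hst).not_ge (card_le_univ _)

end Matrix

section
open scoped Classical

section IncidenceAlgebra

theorem of_delta : Matrix.of (delta : P → P → ℤ[X]) = 1 := by
  ext s t
  simp [delta, Matrix.one_apply]

variable [Fintype P]

theorem of_conv (a b : P → P → ℤ[X]) :
    Matrix.of (conv a b) = Matrix.of a * Matrix.of b := by
  ext s t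
  simp [conv, Matrix.mul_apply]

theorem of_convPow (a : P → P → ℤ[X]) (k : ℕ) :
    Matrix.of (convPow a k) = Matrix.of a ^ k := by
  induction k with
  | zero => exact of_delta
  | succ k ih => rw [convPow, of_conv, ih, pow_succ']

theorem of_invInc (a : P → P → ℤ[X]) :
    Matrix.of (invInc a) = ∑ k ∈ range (Fintype.card P), (1 - Matrix.of a) ^ k := by
  rw [← of_delta, Matrix.of_sub_of, invInc]
  exact (map_sum Matrix.ofAddEquiv _ _).trans (sum_congr rfl fun k _ => of_convPow _ k)

theorem conv_assoc (a b c : P → P → ℤ[X]) : conv (conv a b) c = conv a (conv b c) :=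
  Matrix.of.injective (by simp only [of_conv, Matrix.mul_assoc])

theorem delta_conv (a : P → P → ℤ[X]) : conv delta a = a :=
  Matrix.of.injective (by rw [of_conv, of_delta, Matrix.one_mul])

variable [PartialOrder P] {a : P → P → ℤ[X]}

theorem one_sub_of_pow_card_eq_zero (ha₁ : ∀ s, a s s = 1) (ha₂ : ∀ s t, ¬ s ≤ t → a s t = 0) :
    (1 - Matrix.of a) ^ Fintype.card P = 0 := by
  refine Matrix.pow_card_eq_zero_of_lt fun s t hst => ?_
  rcases eq_or_ne s t with rfl | hne
  · simp [ha₁] at hst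
  · exact lt_of_le_of_ne (by_contra fun hle => hst (by simp [hne, ha₂ s t hle])) hne

theorem invInc_conv_self (ha₁ : ∀ s, a s s = 1) (ha₂ : ∀ s t, ¬ s ≤ t → a s t = 0) :
    conv (invInc a) a = delta := by
  have hgeom := geom_sum_mul_neg (1 - Matrix.of a) (Fintype.card P)
  rw [sub_sub_cancel, one_sub_of_pow_card_eq_zero ha₁ ha₂, sub_zero] at hgeom
  exact Matrix.of.injective (by rw [of_conv, of_delta, of_invInc, hgeom])

theorem conv_invInc_self (ha₁ : ∀ s, a s s = 1) (ha₂ : ∀ s t, ¬ s ≤ t → a s t = 0) :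
    conv a (invInc a) = delta := by
  have hgeom := mul_neg_geom_sum (1 - Matrix.of a) (Fintype.card P)
  rw [sub_sub_cancel, one_sub_of_pow_card_eq_zero ha₁ ha₂, sub_zero] at hgeom
  exact Matrix.of.injective (by rw [of_conv, of_delta, of_invInc, hgeom])

end IncidenceAlgebra

namespace IsWeakRank

variable {rk : P → P → ℤ}

theorem rk_self [Preorder P] (h : IsWeakRank rk) (s : P) : rk s s = 0 := by
  have := h.2 s s s le_rfl le_rfl
  omega

variable [PartialOrder P]

theorem rk_nonneg (h : IsWeakRank rk) {s t : P} (hst : s ≤ t) : 0 ≤ rk s t := by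
  rcases hst.lt_or_eq with hlt | rfl
  · exact (h.1 s t hlt).le
  · exact (h.rk_self s).ge

theorem toNat_add (h : IsWeakRank rk) {s u t : P} (hsu : s ≤ u) (hut : u ≤ t) :
    (rk s t).toNat = (rk s u).toNat + (rk u t).toNat := by
  have := h.2 s u t hsu hut
  have := h.rk_nonneg hsu
  have := h.rk_nonneg hut
  omega

end IsWeakRank

namespace InJ

variable [PartialOrder P] {rk : P → P → ℤ} {a b : P → P → ℤ[X]}

theorem of_natDegree_le_toNat (h : IsWeakRank rk) (hsupp : ∀ s t, ¬ s ≤ t → a s t = 0)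
    (hdeg : ∀ s t, s ≤ t → (a s t).natDegree ≤ (rk s t).toNat) : InJ rk a :=
  ⟨hsupp, fun s t hst => by have := hdeg s t hst; have := h.rk_nonneg hst; omega⟩

theorem natDegree_le_toNat (ha : InJ rk a) (s t : P) : (a s t).natDegree ≤ (rk s t).toNat := by
  by_cases hst : s ≤ t
  · have := ha.2 s t hst
    omega
  · simp [ha.1 s t hst]

theorem mul_apply_eq_zero (ha : InJ rk a) (hb : InJ rk b) {s u t : P}
    (hsut : ¬ (s ≤ u ∧ u ≤ t)) : a s u * b u t = 0 := by
  rcases not_and_or.mp hsut with hsu | hut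
  · rw [ha.1 s u hsu, zero_mul]
  · rw [hb.1 u t hut, mul_zero]

theorem conv [Fintype P] (h : IsWeakRank rk) (ha : InJ rk a) (hb : InJ rk b) :
    InJ rk (conv a b) := by
  refine of_natDegree_le_toNat h (fun s t hst => sum_eq_zero fun u _ =>
    ha.mul_apply_eq_zero hb fun hsut => hst (hsut.1.trans hsut.2)) fun s t _ => ?_
  refine natDegree_sum_le_of_forall_le _ _ fun u _ => ?_
  by_cases hsut : s ≤ u ∧ u ≤ t
  · rw [h.toNat_add hsut.1 hsut.2]
    exact natDegree_mul_le.trans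
      (add_le_add (ha.natDegree_le_toNat s u) (hb.natDegree_le_toNat u t))
  · simp [ha.mul_apply_eq_zero hb hsut]

theorem rev (h : IsWeakRank rk) (ha : InJ rk a) : InJ rk (rev rk a) :=
  of_natDegree_le_toNat h (fun s t hst => by simp [_root_.rev, ha.1 s t hst]) fun s t _ =>
    natDegree_reflect_le.trans (max_le le_rfl (ha.natDegree_le_toNat s t))

theorem delta (h : IsWeakRank rk) : InJ rk (delta : P → P → ℤ[X]) :=
  of_natDegree_le_toNat h (fun s t hst => by simp [_root_.delta, ne_of_not_le hst]) fun s t _ => by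
    by_cases hst : s = t <;> simp [_root_.delta, hst]

theorem zeta (h : IsWeakRank rk) : InJ rk (zeta : P → P → ℤ[X]) :=
  of_natDegree_le_toNat h (fun s t hst => by simp [_root_.zeta, hst]) fun s t hst => by
    simp [_root_.zeta, hst]

end InJ

/-- The rank-bounded incidence algebra `J_rk(P)`. -/
def rankBoundedSubring [PartialOrder P] [Fintype P] {rk : P → P → ℤ} (h : IsWeakRank rk) :
    Subring (Matrix P P ℤ[X]) where
  carrier := {a | InJ rk a}
  mul_mem' {a b} ha hb := of_conv a b ▸ ha.conv h hb
  one_mem' := of_delta (P := P) ▸ InJ.delta h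
  add_mem' {a b} ha hb := InJ.of_natDegree_le_toNat h
    (fun s t hst => by simp [ha.1 s t hst, hb.1 s t hst]) fun s t _ =>
    natDegree_add_le_of_degree_le (ha.natDegree_le_toNat s t) (hb.natDegree_le_toNat s t)
  zero_mem' := InJ.of_natDegree_le_toNat h (fun _ _ _ => rfl) fun _ _ _ => by simp
  neg_mem' {a} ha := InJ.of_natDegree_le_toNat h (fun s t hst => by simp [ha.1 s t hst])
    fun s t _ => by simpa using ha.natDegree_le_toNat s t

theorem InJ.invInc [PartialOrder P] [Fintype P] {rk : P → P → ℤ} (h : IsWeakRank rk)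
    {a : P → P → ℤ[X]} (ha : InJ rk a) : InJ rk (invInc a) := by
  have hmem := (rankBoundedSubring h).sum_mem fun k (_ : k ∈ range (Fintype.card P)) =>
    pow_mem (sub_mem (one_mem _) (show Matrix.of a ∈ rankBoundedSubring h from ha)) k
  rwa [← of_invInc] at hmem

section Reversal

variable {rk : P → P → ℤ}

theorem rev_rev (a : P → P → ℤ[X]) : rev rk (rev rk a) = a := by
  ext s t : 2
  simp [rev]

theorem rev_delta [Preorder P] (h : IsWeakRank rk) : rev rk (delta : P → P → ℤ[X]) = delta := by
  ext s t : 2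
  by_cases hst : s = t
  · simp [rev, delta, hst, h.rk_self, reflect_one]
  · simp [rev, delta, hst]

variable [PartialOrder P] [Fintype P]

theorem rev_conv (h : IsWeakRank rk) {a b : P → P → ℤ[X]} (ha : InJ rk a) (hb : InJ rk b) :
    rev rk (conv a b) = conv (rev rk a) (rev rk b) := by
  ext s t : 2
  simp only [rev, conv, reflect_sum]
  refine sum_congr rfl fun u _ => ?_
  by_cases hsut : s ≤ u ∧ u ≤ t
  · rw [h.toNat_add hsut.1 hsut.2,
      reflect_mul _ _ (ha.natDegree_le_toNat s u) (hb.natDegree_le_toNat u t)]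
  · have hrev := (ha.rev h).mul_apply_eq_zero (hb.rev h) hsut
    rw [ha.mul_apply_eq_zero hb hsut, reflect_zero, ← hrev]
    rfl

theorem isKernel_conv_rev (h : IsWeakRank rk) {a b : P → P → ℤ[X]} (ha : InJ rk a)
    (hb : InJ rk b) (hab : conv a b = delta) (hba : conv b a = delta) :
    IsKernel rk (conv b (rev rk a)) := by
  have hrev : rev rk (conv b (rev rk a)) = conv (rev rk b) a := by
    rw [rev_conv h hb (ha.rev h), rev_rev]
  have hrev_ab : conv (rev rk a) (rev rk b) = delta := by
    rw [← rev_conv h ha hb, hab, rev_delta h]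
  have hrev_ba : conv (rev rk b) (rev rk a) = delta := by
    rw [← rev_conv h hb ha, hba, rev_delta h]
  refine ⟨hb.conv h (ha.rev h), ?_, ?_⟩
  · rw [hrev, conv_assoc, ← conv_assoc (rev rk a), hrev_ab, delta_conv, hba]
  · rw [hrev, conv_assoc, ← conv_assoc a, hab, delta_conv, hrev_ba]

end Reversal

end

/-- The characteristic function `χ = ζ⁻¹·ζ^rev` of a weakly ranked poset is a kernel,
i.e. `χ⁻¹ = χ^rev`. -/
theorem charFn_isKernel {P : Type*} [PartialOrder P] [Fintype P]
    (rk : P → P → ℤ) (h : IsWeakRank rk) :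
    IsKernel rk (charFn rk) := by
  have hζ : InJ rk (zeta : P → P → ℤ[X]) := InJ.zeta h
  have hζ₁ : ∀ s : P, (zeta : P → P → ℤ[X]) s s = 1 := fun s => by simp [zeta]
  exact isKernel_conv_rev h hζ (hζ.invInc h) (conv_invInc_self hζ₁ hζ.1)
    (invInc_conv_self hζ₁ hζ.1)
end

section
/- If f₁ and f₂ are the right KLS functions of (P₁,κ₁) and (P₂,κ₂) respectively, then f₁ ⊗ f₂ is the right KLS function of (P₁ × P₂, κ₁ ⊗ κ₂). -/
open Finset Polynomial


variable {P P₁ P₂ : Type*}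

lemma rk_self_eq_zero {P : Type*} [Preorder P] {rk : P → P → ℤ}
    (h : IsWeakRank rk) (s : P) : rk s s = 0 := by
  have := h.2 s s s le_rfl le_rfl
  omega

lemma rk_nonneg {P : Type*} [PartialOrder P] {rk : P → P → ℤ}
    (h : IsWeakRank rk) {s t : P} (hst : s ≤ t) : 0 ≤ rk s t := by
  rcases eq_or_lt_of_le hst with rfl | hlt
  · exact le_of_eq (rk_self_eq_zero h s).symm
  · exact le_of_lt (h.1 s t hlt)

lemma half_deg_le {P : Type*} [PartialOrder P] [Fintype P] {rk : P → P → ℤ}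
    {κ f : P → P → Polynomial ℤ} (hrk : IsWeakRank rk) (hf : IsRightKLS rk κ f)
    {s t : P} (hst : s ≤ t) : 2 * ((f s t).natDegree : ℤ) ≤ rk s t := by
  rcases eq_or_lt_of_le hst with rfl | hlt
  · rw [hf.2.1 s, Polynomial.natDegree_one, rk_self_eq_zero hrk s]
    norm_num
  · exact le_of_lt (hf.2.2.1 s t hlt)

/-- The tensor product of the right KLS functions of `(P₁,κ₁)` and `(P₂,κ₂)` is the
right KLS function of `(P₁ × P₂, κ₁ ⊗ κ₂)`. -/
theorem tensor_isRightKLS {P₁ P₂ : Type*} [PartialOrder P₁] [Fintype P₁]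
    [PartialOrder P₂] [Fintype P₂]
    (rk₁ : P₁ → P₁ → ℤ) (rk₂ : P₂ → P₂ → ℤ)
    (h₁ : IsWeakRank rk₁) (h₂ : IsWeakRank rk₂)
    (κ₁ : P₁ → P₁ → Polynomial ℤ) (κ₂ : P₂ → P₂ → Polynomial ℤ)
    (hκ₁ : IsKernel rk₁ κ₁) (hκ₂ : IsKernel rk₂ κ₂)
    (f₁ : P₁ → P₁ → Polynomial ℤ) (f₂ : P₂ → P₂ → Polynomial ℤ)
    (hf₁ : IsRightKLS rk₁ κ₁ f₁) (hf₂ : IsRightKLS rk₂ κ₂ f₂) :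
    IsRightKLS (prodRk rk₁ rk₂) (tensor κ₁ κ₂) (tensor f₁ f₂) := by
  refine ⟨⟨?_, ?_⟩, ?_, ?_, ?_⟩
  · rintro ⟨s₁, s₂⟩ ⟨t₁, t₂⟩ h
    rw [Prod.le_def, not_and_or] at h
    rcases h with h | h
    · simp [tensor, hf₁.1.1 _ _ h]
    · simp [tensor, hf₂.1.1 _ _ h]
  · rintro ⟨s₁, s₂⟩ ⟨t₁, t₂⟩ h
    rw [Prod.le_def] at h
    calc ((tensor f₁ f₂ (s₁, s₂) (t₁, t₂)).natDegree : ℤ)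
        ≤ ((f₁ s₁ t₁).natDegree : ℤ) + ((f₂ s₂ t₂).natDegree : ℤ) := by
          exact_mod_cast Polynomial.natDegree_mul_le
      _ ≤ rk₁ s₁ t₁ + rk₂ s₂ t₂ :=
          add_le_add (hf₁.1.2 _ _ h.1) (hf₂.1.2 _ _ h.2)
  · rintro ⟨s₁, s₂⟩
    simp [tensor, hf₁.2.1, hf₂.2.1]
  · rintro ⟨s₁, s₂⟩ ⟨t₁, t₂⟩ h
    have key : 2 * ((tensor f₁ f₂ (s₁, s₂) (t₁, t₂)).natDegree : ℤ) ≤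
        2 * ((f₁ s₁ t₁).natDegree : ℤ) + 2 * ((f₂ s₂ t₂).natDegree : ℤ) := by
      have := Polynomial.natDegree_mul_le (p := f₁ s₁ t₁) (q := f₂ s₂ t₂)
      have : ((tensor f₁ f₂ (s₁, s₂) (t₁, t₂)).natDegree : ℤ) ≤
          ((f₁ s₁ t₁).natDegree : ℤ) + ((f₂ s₂ t₂).natDegree : ℤ) := by exact_mod_cast this
      omega
    rw [Prod.lt_iff] at h
    unfold prodRk
    dsimp only at key h ⊢
    rcases h with ⟨hlt, hle⟩ | ⟨hle, hlt⟩
    · have a := hf₁.2.2.1 _ _ hlt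
      have b := half_deg_le h₂ hf₂ hle
      omega
    · have a := half_deg_le h₁ hf₁ hle
      have b := hf₂.2.2.1 _ _ hlt
      omega
  · funext p q
    obtain ⟨s₁, s₂⟩ := p
    obtain ⟨t₁, t₂⟩ := q
    have conv_eq : conv (tensor κ₁ κ₂) (tensor f₁ f₂) (s₁, s₂) (t₁, t₂)
        = conv κ₁ f₁ s₁ t₁ * conv κ₂ f₂ s₂ t₂ := by
      simp only [conv, tensor, Fintype.sum_prod_type, Finset.sum_mul_sum]
      exact Finset.sum_congr rfl fun u₁ _ => Finset.sum_congr rfl fun u₂ _ => by ring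
    rw [conv_eq, ← hf₁.2.2.2, ← hf₂.2.2.2]
    by_cases hle : (s₁, s₂) ≤ (t₁, t₂)
    · rw [Prod.mk_le_mk] at hle
      have d1 : (f₁ s₁ t₁).natDegree ≤ (rk₁ s₁ t₁).toNat :=
        (Int.le_toNat (rk_nonneg h₁ hle.1)).mpr (hf₁.1.2 _ _ hle.1)
      have d2 : (f₂ s₂ t₂).natDegree ≤ (rk₂ s₂ t₂).toNat :=
        (Int.le_toNat (rk_nonneg h₂ hle.2)).mpr (hf₂.1.2 _ _ hle.2)
      have htn : (prodRk rk₁ rk₂ (s₁, s₂) (t₁, t₂)).toNat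
          = (rk₁ s₁ t₁).toNat + (rk₂ s₂ t₂).toNat := by
        show (rk₁ s₁ t₁ + rk₂ s₂ t₂).toNat = _
        have := rk_nonneg h₁ hle.1
        have := rk_nonneg h₂ hle.2
        omega
      simp only [rev, tensor, htn]
      exact Polynomial.reflect_mul _ _ d1 d2
    · rw [Prod.le_def, not_and_or] at hle
      rcases hle with h | h
      · simp [rev, tensor, hf₁.1.1 _ _ h]
      · simp [rev, tensor, hf₂.1.1 _ _ h]
end

section
/- Let κ₁, κ₂ be kernels of weakly ranked posets P₁, P₂ and κ = κ₁⊗κ₂ the kernel of P₁×P₂. The reduced kernels satisfy the identity κ̄ = (x−1)·(κ̄₁ ⊗ κ̄₂) + x·(κ̄₁ ⊗ I) + x·(I ⊗ κ̄₂) + x·I in the incidence algebra of P₁ × P₂. -/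
open Finset Polynomial


variable {P P₁ P₂ : Type*}

/-- The reduced kernels satisfy
`κ̄ = (x-1)·(κ̄₁ ⊗ κ̄₂) + x·(κ̄₁ ⊗ I) + x·(I ⊗ κ̄₂) + x·I`. -/
theorem reducedKernel_prod {P₁ P₂ : Type*} [PartialOrder P₁] [Fintype P₁]
    [PartialOrder P₂] [Fintype P₂]
    (rk₁ : P₁ → P₁ → ℤ) (rk₂ : P₂ → P₂ → ℤ)
    (h₁ : IsWeakRank rk₁) (h₂ : IsWeakRank rk₂)
    (κ₁ : P₁ → P₁ → Polynomial ℤ) (κ₂ : P₂ → P₂ → Polynomial ℤ)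
    (hκ₁ : IsKernel rk₁ κ₁) (hκ₂ : IsKernel rk₂ κ₂)
    (hd₁ : ∀ s : P₁, κ₁ s s = 1) (hd₂ : ∀ s : P₂, κ₂ s s = 1)
    (κb₁ : P₁ → P₁ → Polynomial ℤ) (κb₂ : P₂ → P₂ → Polynomial ℤ)
    (κb : P₁ × P₂ → P₁ × P₂ → Polynomial ℤ)
    (hr₁ : IsReducedKernel κ₁ κb₁) (hr₂ : IsReducedKernel κ₂ κb₂)
    (hr : IsReducedKernel (tensor κ₁ κ₂) κb) :
    κb = (X - 1 : Polynomial ℤ) • tensor κb₁ κb₂ + (X : Polynomial ℤ) • tensor κb₁ delta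
        + (X : Polynomial ℤ) • tensor delta κb₂
        + (X : Polynomial ℤ) • (delta : P₁ × P₂ → P₁ × P₂ → Polynomial ℤ) := by
  have hX : (X - 1 : Polynomial ℤ) ≠ 0 := by
    intro h
    have := congrArg (Polynomial.eval 0) h
    simp at this
  funext p q
  obtain ⟨s₁, s₂⟩ := p
  obtain ⟨t₁, t₂⟩ := q
  simp only [Pi.add_apply, Pi.smul_apply, smul_eq_mul, tensor, delta]
  by_cases h1 : s₁ = t₁ <;> by_cases h2 : s₂ = t₂
  · subst h1; subst h2
    have : (s₁, s₂) = (s₁, s₂) := rfl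
    rw [hr.1, hr₁.1, hr₂.1]
    simp
    ring
  · subst h1
    apply mul_left_cancel₀ hX
    have hne : (s₁, s₂) ≠ (s₁, t₂) := by simp [h2]
    rw [hr.2 _ _ hne]
    have e1 : κb₁ s₁ s₁ = -1 := hr₁.1 s₁
    have e2 : (X - 1 : Polynomial ℤ) * κb₂ s₂ t₂ = κ₂ s₂ t₂ := hr₂.2 _ _ h2
    simp only [tensor, hd₁, e1, if_pos rfl, if_neg h2, if_neg hne, if_true]
    rw [one_mul, ← e2]; ring
  · subst h2
    apply mul_left_cancel₀ hX
    have hne : (s₁, s₂) ≠ (t₁, s₂) := by simp [h1]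
    rw [hr.2 _ _ hne]
    have e1 : κb₂ s₂ s₂ = -1 := hr₂.1 s₂
    have e2 : (X - 1 : Polynomial ℤ) * κb₁ s₁ t₁ = κ₁ s₁ t₁ := hr₁.2 _ _ h1
    simp only [tensor, hd₂, e1, if_pos rfl, if_neg h1, if_neg hne, if_true]
    rw [mul_one, ← e2]; ring
  · apply mul_left_cancel₀ hX
    have hne : (s₁, s₂) ≠ (t₁, t₂) := by simp [h1]
    rw [hr.2 _ _ hne]
    have e1 : (X - 1 : Polynomial ℤ) * κb₁ s₁ t₁ = κ₁ s₁ t₁ := hr₁.2 _ _ h1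
    have e2 : (X - 1 : Polynomial ℤ) * κb₂ s₂ t₂ = κ₂ s₂ t₂ := hr₂.2 _ _ h2
    simp only [tensor, if_neg h1, if_neg h2, if_neg (show ¬(s₁,s₂) = (t₁,t₂) from hne)]
    rw [← e1, ← e2]; ring
end

section
/- Let H₁, H₂, H be the Chow functions of weakly ranked posets P₁, P₂, and P₁×P₂ with respect to kernels κ₁, κ₂, and κ = κ₁⊗κ₂. Then H = H₁⊗H₂ + x·H·(H₁⊗H₂) − x·H·(I⊗H₂) − x·H·(H₁⊗I) + x·H in the incidence algebra of P₁×P₂. -/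
open Finset Polynomial


variable {P P₁ P₂ : Type*}

section AuxChow
open Finset Polynomial
open scoped Classical

variable {P P₁ P₂ : Type*} [Fintype P] [Fintype P₁] [Fintype P₂]

lemma aux_conv_assoc (a b c : P → P → Polynomial ℤ) :
    conv (conv a b) c = conv a (conv b c) := by
  funext s t
  simp only [conv, Finset.sum_mul, Finset.mul_sum]
  rw [Finset.sum_comm]
  exact Finset.sum_congr rfl fun u _ => Finset.sum_congr rfl fun v _ => by ring

lemma aux_conv_delta (a : P → P → Polynomial ℤ) : conv a delta = a := by
  funext s t
  simp [conv, delta, mul_ite]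

lemma aux_delta_conv (a : P → P → Polynomial ℤ) : conv delta a = a := by
  funext s t
  simp [conv, delta, ite_mul]

lemma aux_conv_add_left (a b c : P → P → Polynomial ℤ) :
    conv (a + b) c = conv a c + conv b c := by
  funext s t
  simp [conv, add_mul, Finset.sum_add_distrib]

lemma aux_conv_add_right (a b c : P → P → Polynomial ℤ) :
    conv a (b + c) = conv a b + conv a c := by
  funext s t
  simp [conv, mul_add, Finset.sum_add_distrib]

lemma aux_conv_sub_left (a b c : P → P → Polynomial ℤ) :
    conv (a - b) c = conv a c - conv b c := by
  funext s t
  simp [conv, sub_mul, Finset.sum_sub_distrib]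

lemma aux_conv_sub_right (a b c : P → P → Polynomial ℤ) :
    conv a (b - c) = conv a b - conv a c := by
  funext s t
  simp [conv, mul_sub, Finset.sum_sub_distrib]

lemma aux_conv_neg_left (a b : P → P → Polynomial ℤ) :
    conv (-a) b = -conv a b := by
  funext s t
  simp [conv]

lemma aux_conv_neg_right (a b : P → P → Polynomial ℤ) :
    conv a (-b) = -conv a b := by
  funext s t
  simp [conv]

lemma aux_conv_smul_left (p : Polynomial ℤ) (a b : P → P → Polynomial ℤ) :
    conv (p • a) b = p • conv a b := by
  funext s t
  simp only [conv, Pi.smul_apply, smul_eq_mul, Finset.mul_sum]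
  exact Finset.sum_congr rfl fun u _ => by ring

lemma aux_conv_smul_right (p : Polynomial ℤ) (a b : P → P → Polynomial ℤ) :
    conv a (p • b) = p • conv a b := by
  funext s t
  simp only [conv, Pi.smul_apply, smul_eq_mul, Finset.mul_sum]
  exact Finset.sum_congr rfl fun u _ => by ring

lemma aux_tensor_conv (a₁ b₁ : P₁ → P₁ → Polynomial ℤ) (a₂ b₂ : P₂ → P₂ → Polynomial ℤ) :
    conv (tensor a₁ a₂) (tensor b₁ b₂) = tensor (conv a₁ b₁) (conv a₂ b₂) := by
  funext p q
  simp only [conv, tensor, Fintype.sum_prod_type, Finset.sum_mul, Finset.mul_sum]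
  rw [Finset.sum_comm]
  exact Finset.sum_congr rfl fun u _ => Finset.sum_congr rfl fun v _ => by ring

lemma aux_tensor_delta :
    tensor (delta : P₁ → P₁ → Polynomial ℤ) (delta : P₂ → P₂ → Polynomial ℤ)
      = (delta : P₁ × P₂ → P₁ × P₂ → Polynomial ℤ) := by
  funext p q
  by_cases h1 : p.1 = q.1 <;> by_cases h2 : p.2 = q.2 <;>
    simp [tensor, delta, Prod.ext_iff, h1, h2]

lemma aux_tensor_neg_left (a₁ : P₁ → P₁ → Polynomial ℤ) (a₂ : P₂ → P₂ → Polynomial ℤ) :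
    tensor (-a₁) a₂ = -tensor a₁ a₂ := by
  funext p q
  simp [tensor]

lemma aux_tensor_neg_right (a₁ : P₁ → P₁ → Polynomial ℤ) (a₂ : P₂ → P₂ → Polynomial ℤ) :
    tensor a₁ (-a₂) = -tensor a₁ a₂ := by
  funext p q
  simp [tensor]

end AuxChow

/-- Chow functions of a product of weakly ranked posets:
`H = H₁⊗H₂ + x·H·(H₁⊗H₂) − x·H·(I⊗H₂) − x·H·(H₁⊗I) + x·H`. -/
theorem chowFunction_prod_right {P₁ P₂ : Type*} [PartialOrder P₁] [Fintype P₁]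
    [PartialOrder P₂] [Fintype P₂]
    (rk₁ : P₁ → P₁ → ℤ) (rk₂ : P₂ → P₂ → ℤ)
    (h₁ : IsWeakRank rk₁) (h₂ : IsWeakRank rk₂)
    (κ₁ : P₁ → P₁ → Polynomial ℤ) (κ₂ : P₂ → P₂ → Polynomial ℤ)
    (hκ₁ : IsKernel rk₁ κ₁) (hκ₂ : IsKernel rk₂ κ₂)
    (hd₁ : ∀ s : P₁, κ₁ s s = 1) (hd₂ : ∀ s : P₂, κ₂ s s = 1)
    (κb₁ : P₁ → P₁ → Polynomial ℤ) (κb₂ : P₂ → P₂ → Polynomial ℤ)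
    (κb : P₁ × P₂ → P₁ × P₂ → Polynomial ℤ)
    (hr₁ : IsReducedKernel κ₁ κb₁) (hr₂ : IsReducedKernel κ₂ κb₂)
    (hr : IsReducedKernel (tensor κ₁ κ₂) κb)
    (H₁ : P₁ → P₁ → Polynomial ℤ) (H₂ : P₂ → P₂ → Polynomial ℤ)
    (H : P₁ × P₂ → P₁ × P₂ → Polynomial ℤ)
    (hH₁ : IsChowFunction κb₁ H₁) (hH₂ : IsChowFunction κb₂ H₂)
    (hH : IsChowFunction κb H) :
    H = tensor H₁ H₂ + (X : Polynomial ℤ) • conv H (tensor H₁ H₂)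
        - (X : Polynomial ℤ) • conv H (tensor delta H₂)
        - (X : Polynomial ℤ) • conv H (tensor H₁ delta)
        + (X : Polynomial ℤ) • H := by
  classical
  obtain ⟨hκb1d, hκb1o⟩ := hr₁
  obtain ⟨hκb2d, hκb2o⟩ := hr₂
  obtain ⟨hκbd, hκbo⟩ := hr
  obtain ⟨hH₁l, hH₁r⟩ := hH₁
  obtain ⟨hH₂l, hH₂r⟩ := hH₂
  obtain ⟨hHl, hHr⟩ := hH
  have hX : (X - 1 : Polynomial ℤ) ≠ 0 := by
    have := Polynomial.X_sub_C_ne_zero (1 : ℤ)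
    simpa using this
  -- Step 1: the reduced kernel of the product decomposes.
  have key1 : κb = (X - 1 : Polynomial ℤ) • tensor κb₁ κb₂
      + (X : Polynomial ℤ) • tensor κb₁ delta
      + (X : Polynomial ℤ) • tensor delta κb₂
      + (X : Polynomial ℤ) • (delta : P₁ × P₂ → P₁ × P₂ → Polynomial ℤ) := by
    funext p q
    obtain ⟨s₁, s₂⟩ := p
    obtain ⟨t₁, t₂⟩ := q
    simp only [Pi.add_apply, Pi.smul_apply, smul_eq_mul, tensor, delta]
    by_cases h1 : s₁ = t₁ <;> by_cases h2 : s₂ = t₂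
    · subst h1; subst h2
      rw [hκbd (s₁, s₂), hκb1d, hκb2d, if_pos rfl, if_pos rfl, if_pos rfl]
      ring
    · subst h1
      have hpq : (s₁, s₂) ≠ (s₁, t₂) := by simp [h2]
      apply mul_left_cancel₀ hX
      rw [hκbo _ _ hpq]
      show κ₁ s₁ s₁ * κ₂ s₂ t₂ = _
      rw [hd₁, ← hκb2o s₂ t₂ h2, hκb1d, if_pos rfl, if_neg h2, if_neg hpq]
      ring
    · subst h2
      have hpq : (s₁, s₂) ≠ (t₁, s₂) := by simp [h1]
      apply mul_left_cancel₀ hX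
      rw [hκbo _ _ hpq]
      show κ₁ s₁ t₁ * κ₂ s₂ s₂ = _
      rw [hd₂, ← hκb1o s₁ t₁ h1, hκb2d, if_pos rfl, if_neg h1, if_neg hpq]
      ring
    · have hpq : (s₁, s₂) ≠ (t₁, t₂) := by simp [h1]
      apply mul_left_cancel₀ hX
      rw [hκbo _ _ hpq]
      show κ₁ s₁ t₁ * κ₂ s₂ t₂ = _
      rw [← hκb1o s₁ t₁ h1, ← hκb2o s₂ t₂ h2, if_neg h1, if_neg h2, if_neg hpq]
      ring
  -- Step 2: convolutions of the basic tensors with κb, on both sides.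
  have cA : conv (tensor H₁ H₂) κb
      = (X - 1 : Polynomial ℤ) • (delta : P₁ × P₂ → P₁ × P₂ → Polynomial ℤ)
        - (X : Polynomial ℤ) • tensor delta H₂ - (X : Polynomial ℤ) • tensor H₁ delta
        + (X : Polynomial ℤ) • tensor H₁ H₂ := by
    rw [key1]
    simp only [aux_conv_add_right, aux_conv_smul_right, aux_conv_delta, aux_tensor_conv,
      hH₁r, hH₂r, aux_tensor_neg_left, aux_tensor_neg_right, neg_neg, aux_tensor_delta]
    module
  have cA' : conv κb (tensor H₁ H₂)
      = (X - 1 : Polynomial ℤ) • (delta : P₁ × P₂ → P₁ × P₂ → Polynomial ℤ)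
        - (X : Polynomial ℤ) • tensor delta H₂ - (X : Polynomial ℤ) • tensor H₁ delta
        + (X : Polynomial ℤ) • tensor H₁ H₂ := by
    rw [key1]
    simp only [aux_conv_add_left, aux_conv_smul_left, aux_delta_conv, aux_tensor_conv,
      hH₁l, hH₂l, aux_tensor_neg_left, aux_tensor_neg_right, neg_neg, aux_tensor_delta]
    module
  have cD2 : conv (tensor delta H₂) κb
      = -((X - 1 : Polynomial ℤ) • tensor κb₁ delta) + (X : Polynomial ℤ) • tensor κb₁ H₂
        - (X : Polynomial ℤ) • (delta : P₁ × P₂ → P₁ × P₂ → Polynomial ℤ)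
        + (X : Polynomial ℤ) • tensor delta H₂ := by
    rw [key1]
    simp only [aux_conv_add_right, aux_conv_smul_right, aux_conv_delta, aux_tensor_conv,
      hH₂r, aux_delta_conv, aux_tensor_neg_left, aux_tensor_neg_right, neg_neg,
      aux_tensor_delta]
    module
  have cD2' : conv κb (tensor delta H₂)
      = -((X - 1 : Polynomial ℤ) • tensor κb₁ delta) + (X : Polynomial ℤ) • tensor κb₁ H₂
        - (X : Polynomial ℤ) • (delta : P₁ × P₂ → P₁ × P₂ → Polynomial ℤ)
        + (X : Polynomial ℤ) • tensor delta H₂ := by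
    rw [key1]
    simp only [aux_conv_add_left, aux_conv_smul_left, aux_delta_conv, aux_tensor_conv,
      hH₂l, aux_conv_delta, aux_tensor_neg_left, aux_tensor_neg_right, neg_neg,
      aux_tensor_delta]
    module
  have cD1 : conv (tensor H₁ delta) κb
      = -((X - 1 : Polynomial ℤ) • tensor delta κb₂) + (X : Polynomial ℤ) • tensor H₁ κb₂
        - (X : Polynomial ℤ) • (delta : P₁ × P₂ → P₁ × P₂ → Polynomial ℤ)
        + (X : Polynomial ℤ) • tensor H₁ delta := by
    rw [key1]
    simp only [aux_conv_add_right, aux_conv_smul_right, aux_conv_delta, aux_tensor_conv,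
      hH₁r, aux_delta_conv, aux_tensor_neg_left, aux_tensor_neg_right, neg_neg,
      aux_tensor_delta]
    module
  have cD1' : conv κb (tensor H₁ delta)
      = -((X - 1 : Polynomial ℤ) • tensor delta κb₂) + (X : Polynomial ℤ) • tensor H₁ κb₂
        - (X : Polynomial ℤ) • (delta : P₁ × P₂ → P₁ × P₂ → Polynomial ℤ)
        + (X : Polynomial ℤ) • tensor H₁ delta := by
    rw [key1]
    simp only [aux_conv_add_left, aux_conv_smul_left, aux_delta_conv, aux_tensor_conv,
      hH₁l, aux_conv_delta, aux_tensor_neg_left, aux_tensor_neg_right, neg_neg,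
      aux_tensor_delta]
    module
  -- Step 3: the combination B commutes to the other side of κb.
  have hBeq : conv (tensor H₁ H₂) κb - conv (tensor delta H₂) κb - conv (tensor H₁ delta) κb + κb
      = conv κb ((delta : P₁ × P₂ → P₁ × P₂ → Polynomial ℤ)
          - tensor delta H₂ - tensor H₁ delta + tensor H₁ H₂) := by
    rw [aux_conv_add_right, aux_conv_sub_right, aux_conv_sub_right, aux_conv_delta,
      cA, cA', cD2, cD2', cD1, cD1']
    module
  -- Step 4: multiply B by H on the left.
  have hHB : conv H (conv (tensor H₁ H₂) κb) - conv H (conv (tensor delta H₂) κb)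
        - conv H (conv (tensor H₁ delta) κb) + conv H κb
      = -((delta : P₁ × P₂ → P₁ × P₂ → Polynomial ℤ)
          - tensor delta H₂ - tensor H₁ delta + tensor H₁ H₂) := by
    rw [← aux_conv_sub_right, ← aux_conv_sub_right, ← aux_conv_add_right, hBeq,
      ← aux_conv_assoc, hHr, aux_conv_neg_left, aux_delta_conv]
  -- Step 5: the right-hand side convolved with κb equals conv H κb.
  have key : conv (tensor H₁ H₂ + (X : Polynomial ℤ) • conv H (tensor H₁ H₂)
        - (X : Polynomial ℤ) • conv H (tensor delta H₂)
        - (X : Polynomial ℤ) • conv H (tensor H₁ delta)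
        + (X : Polynomial ℤ) • H) κb = conv H κb := by
    have expand : conv (tensor H₁ H₂ + (X : Polynomial ℤ) • conv H (tensor H₁ H₂)
          - (X : Polynomial ℤ) • conv H (tensor delta H₂)
          - (X : Polynomial ℤ) • conv H (tensor H₁ delta)
          + (X : Polynomial ℤ) • H) κb
        = conv (tensor H₁ H₂) κb
          + (X : Polynomial ℤ) • (conv H (conv (tensor H₁ H₂) κb)
            - conv H (conv (tensor delta H₂) κb)
            - conv H (conv (tensor H₁ delta) κb) + conv H κb) := by
      simp only [aux_conv_add_left, aux_conv_sub_left, aux_conv_smul_left, aux_conv_assoc]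
      module
    rw [expand, hHB, cA, hHr]
    module
  -- Step 6: cancel κb using conv κb H = -delta.
  have final := congrArg (fun a => conv a H) key
  simp only [aux_conv_assoc, hHl, aux_conv_neg_right, aux_conv_delta, neg_inj] at final
  exact final.symm
end
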